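/- arXiv:1307.3678 — 4 statements merged into one kernel-verified Lean document; each statement's English description precedes it below -/
import Mathlib

section
/- For any disc B(z,r) in the complex plane and any point ω in B(z,r), the integral over B(z,r) of K(ω-ξ) with respect to 2-dimensional Lebesgue measure equals 0, where K(z) = z̄/z². -/
/-!
In polar coordinates centred at `ω`, the kernel `ξ ↦ K (ω - ξ)` becomes `ρ⁻¹ · (-e^{-3iθ})`, so the
factor `ρ` of the Jacobian cancels it and the integral over the disc is
`-∫ R(θ) e^{-3iθ} dθ`, where `R(θ) = a(θ) + √(a(θ)² + r² - |z - ω|²)` is the distance from `ω` to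
the boundary circle in direction `θ`, with `a(θ) = Re((z - ω) e^{-iθ})`. The linear part `a` only
has the frequencies `±1`, so `a(θ) e^{-3iθ}` has mean zero; the square root is `π`-periodic while
`e^{-3iθ}` changes sign under `θ ↦ θ + π`, so that product has mean zero as well.
-/

open MeasureTheory Metric Complex

noncomputable def K (z : ℂ) : ℂ := (starRingEnd ℂ) z / z ^ 2

open Real Set

theorem Function.Antiperiodic.intervalIntegral_add_two_mul_eq_zero {E : Type*}
    [NormedAddCommGroup E] [NormedSpace ℝ E] {f : ℝ → E} {T : ℝ}
    (hf : Function.Antiperiodic f T) (t : ℝ) : ∫ x in t..t + 2 * T, f x = 0 := by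
  by_cases hint : IntervalIntegrable f volume t (t + 2 * T)
  · have hmid : t + T ∈ uIcc t (t + 2 * T) := by
      rcases le_total 0 T with h | h
      · exact mem_uIcc.2 (Or.inl ⟨by linarith, by linarith⟩)
      · exact mem_uIcc.2 (Or.inr ⟨by linarith, by linarith⟩)
    have h₁ := hint.mono_set (uIcc_subset_uIcc left_mem_uIcc hmid)
    have h₂ := hint.mono_set (uIcc_subset_uIcc hmid right_mem_uIcc)
    have hshift : ∫ x in t + T..t + 2 * T, f x = -∫ x in t..t + T, f x := by
      rw [show t + 2 * T = t + T + T by ring, ← intervalIntegral.integral_comp_add_right,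
        ← intervalIntegral.integral_neg]
      exact intervalIntegral.integral_congr fun x _ => hf x
    rw [← intervalIntegral.integral_add_adjacent_intervals h₁ h₂, hshift, add_neg_cancel]
  · exact intervalIntegral.integral_undef hint

theorem integral_exp_int_mul_mul_I {n : ℤ} (hn : n ≠ 0) :
    ∫ θ in -π..π, exp (n * θ * I) = 0 := by
  have hc : (n * I : ℂ) ≠ 0 := mul_ne_zero (Int.cast_ne_zero.2 hn) I_ne_zero
  have key : exp (n * I * π) = exp (n * I * (-π : ℝ)) := by
    rw [show (n * I * π : ℂ) = n * I * (-π : ℝ) + n * (2 * π * I) by push_cast; ring,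
      Complex.exp_add, exp_int_mul_two_pi_mul_I, mul_one]
  simp_rw [show ∀ θ : ℝ, (n * θ * I : ℂ) = n * I * θ from fun θ => by ring]
  rw [integral_exp_mul_complex hc, key, sub_self, zero_div]

lemma exp_neg_mul_I_add_pi (θ : ℝ) : exp (-(↑(θ + π) * I)) = -exp (-(θ * I)) := by
  rw [show -(↑(θ + π) * I) = -(θ * I) - π * I by push_cast; ring]
  exact Complex.exp_antiperiodic.sub_eq _

lemma exp_neg_three_mul_I_add_pi (θ : ℝ) : exp (-3 * ↑(θ + π) * I) = -exp (-3 * θ * I) := by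
  rw [show -3 * ↑(θ + π) * I = -3 * θ * I - π * I - 2 * π * I by push_cast; ring,
    Complex.exp_periodic.sub_eq]
  exact Complex.exp_antiperiodic.sub_eq _

section Radial

variable {E : Type*} [NormedAddCommGroup E] {s : Set ℂ} {ω : ℂ} {h : ℝ → E}

lemma measurableSet_circleMap_mem (hs : MeasurableSet s) :
    MeasurableSet {p : ℝ × ℝ | circleMap ω p.1 p.2 ∈ s} :=
  (show Continuous fun p : ℝ × ℝ => circleMap ω p.1 p.2 by unfold circleMap; fun_prop).measurable
    hs

lemma setIntegral_eq_setIntegral_polar [NormedSpace ℝ E] (hs : MeasurableSet s) {f : ℂ → E}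
    (hfh : ∀ ρ > 0, ∀ θ, ρ • f (circleMap ω ρ θ) = h θ) :
    ∫ ξ in s, f ξ = ∫ p in Ioi 0 ×ˢ Ioo (-π) π,
      {p : ℝ × ℝ | circleMap ω p.1 p.2 ∈ s}.indicator (fun p => h p.2) p := by
  rw [← integral_indicator hs, ← integral_add_left_eq_self _ ω,
    ← Complex.integral_comp_polarCoord_symm, polarCoord_target]
  refine setIntegral_congr_fun (measurableSet_Ioi.prod measurableSet_Ioo) fun p hp => ?_
  have hcircle : ω + Complex.polarCoord.symm p = circleMap ω p.1 p.2 := by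
    simp [circleMap, Complex.exp_mul_I, ← ofReal_cos, ← ofReal_sin]
  rw [hcircle]
  by_cases hps : circleMap ω p.1 p.2 ∈ s
  · simp [hps, hfh p.1 hp.1 p.2]
  · simp [hps]

lemma integrableOn_polar_indicator (hs : MeasurableSet s) (hsb : Bornology.IsBounded s)
    (hh : Continuous h) :
    IntegrableOn ({p : ℝ × ℝ | circleMap ω p.1 p.2 ∈ s}.indicator (fun p => h p.2))
      (Ioi 0 ×ˢ Ioo (-π) π) := by
  obtain ⟨M, hM⟩ := hsb.subset_closedBall ω
  have hcompact : IntegrableOn (fun p : ℝ × ℝ => h p.2) (Icc 0 M ×ˢ Icc (-π) π) :=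
    (hh.comp continuous_snd).continuousOn.integrableOn_compact (isCompact_Icc.prod isCompact_Icc)
  rw [IntegrableOn, integrable_indicator_iff (measurableSet_circleMap_mem hs),
    IntegrableOn, Measure.restrict_restrict (measurableSet_circleMap_mem hs)]
  refine hcompact.mono_set fun p ⟨hps, hp⟩ => ⟨⟨le_of_lt hp.1, ?_⟩, Ioo_subset_Icc_self hp.2⟩
  have := hM hps
  rwa [mem_closedBall, dist_eq_norm, circleMap_sub_center, norm_circleMap_zero,
    abs_of_pos hp.1] at this

variable [NormedSpace ℝ E] [CompleteSpace E] {R : ℝ → ℝ}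

lemma integral_Ioi_polar_indicator (hR : ∀ θ, 0 ≤ R θ)
    (hsR : ∀ ρ > 0, ∀ θ, circleMap ω ρ θ ∈ s ↔ ρ ≤ R θ) (θ : ℝ) :
    ∫ ρ in Ioi 0, {p : ℝ × ℝ | circleMap ω p.1 p.2 ∈ s}.indicator (fun p => h p.2) (ρ, θ) =
      R θ • h θ := by
  calc _ = ∫ ρ in Ioi 0, (Ioc 0 (R θ)).indicator (fun _ => h θ) ρ := by
        refine setIntegral_congr_fun measurableSet_Ioi fun ρ hρ => ?_
        by_cases hρs : circleMap ω ρ θ ∈ s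
        · simp [hρs, (hsR ρ hρ θ).1 hρs, show (0 : ℝ) < ρ from hρ]
        · simp only [hρs, indicator_of_notMem, mem_ofPred, not_false_eq_true]
          exact (indicator_of_notMem (fun hρR => hρs ((hsR ρ hρ θ).2 hρR.2)) _).symm
    _ = ∫ _ in Ioc 0 (R θ), h θ := by
        rw [setIntegral_indicator measurableSet_Ioc,
          inter_eq_self_of_subset_right Ioc_subset_Ioi_self]
    _ = R θ • h θ := by
        rw [setIntegral_const, Real.volume_real_Ioc_of_le (hR θ), sub_zero]

/-- Integral of a function homogeneous of degree `-1` about `ω` over a set that is star-shaped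
about `ω` with radial function `R`. -/
theorem setIntegral_eq_intervalIntegral_of_radial (hs : MeasurableSet s)
    (hsb : Bornology.IsBounded s) (hR : ∀ θ, 0 ≤ R θ)
    (hsR : ∀ ρ > 0, ∀ θ, circleMap ω ρ θ ∈ s ↔ ρ ≤ R θ) (hh : Continuous h) {f : ℂ → E}
    (hfh : ∀ ρ > 0, ∀ θ, ρ • f (circleMap ω ρ θ) = h θ) :
    ∫ ξ in s, f ξ = ∫ θ in -π..π, R θ • h θ := by
  have hint := integrableOn_polar_indicator (ω := ω) hs hsb hh
  rw [IntegrableOn, Measure.volume_eq_prod, ← Measure.prod_restrict] at hint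
  rw [setIntegral_eq_setIntegral_polar hs hfh, Measure.volume_eq_prod, ← Measure.prod_restrict,
    integral_prod_symm _ hint, intervalIntegral.integral_of_le (by linarith [pi_pos]),
    integral_Ioc_eq_integral_Ioo]
  exact setIntegral_congr_fun measurableSet_Ioo fun θ _ => integral_Ioi_polar_indicator hR hsR θ

end Radial

section Disc

/-- The distance from `ω` to the circle `‖ξ - z‖ = r` along the ray of direction `θ`, where
`c = z - ω`: the larger root `ρ` of `ρ² - 2 Re(c e^{-iθ}) ρ + ‖c‖² = r²`. -/
noncomputable def exitRadius (c : ℂ) (r θ : ℝ) : ℝ :=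
  (c * exp (-(θ * I))).re + √((c * exp (-(θ * I))).re ^ 2 + (r ^ 2 - ‖c‖ ^ 2))

lemma le_add_sqrt_iff {a d ρ : ℝ} (hd : 0 ≤ d) (hρ : 0 ≤ ρ) :
    ρ ^ 2 - 2 * a * ρ ≤ d ↔ ρ ≤ a + √(a ^ 2 + d) := by
  have hs := Real.sq_sqrt (by positivity : 0 ≤ a ^ 2 + d)
  have ha : |a| ≤ √(a ^ 2 + d) := Real.abs_le_sqrt (by linarith)
  have := le_abs_self a
  constructor
  · intro h; nlinarith [Real.sqrt_nonneg (a ^ 2 + d)]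
  · intro h; nlinarith [Real.sqrt_nonneg (a ^ 2 + d)]

lemma norm_circleMap_sub_sq (ω z : ℂ) (ρ θ : ℝ) :
    ‖circleMap ω ρ θ - z‖ ^ 2 =
      ρ ^ 2 - 2 * ((z - ω) * exp (-(θ * I))).re * ρ + ‖z - ω‖ ^ 2 := by
  set u := (z - ω) * exp (-(θ * I))
  have hu : ‖u‖ = ‖z - ω‖ := by
    rw [norm_mul, ← neg_mul, ← ofReal_neg, norm_exp_ofReal_mul_I, mul_one]
  have hrot : circleMap ω ρ θ - z = (ρ - u) * exp (θ * I) := by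
    rw [circleMap, sub_mul, mul_assoc, ← Complex.exp_add]
    simp only [neg_add_cancel, Complex.exp_zero, mul_one]
    ring
  rw [hrot, norm_mul, norm_exp_ofReal_mul_I, mul_one, ← hu, Complex.sq_norm, Complex.sq_norm,
    normSq_apply, normSq_apply]
  simp only [sub_re, ofReal_re, sub_im, ofReal_im, zero_sub, mul_neg, neg_mul, neg_neg]
  ring

lemma circleMap_mem_closedBall_iff {z ω : ℂ} {r ρ : ℝ} (hω : ω ∈ closedBall z r) (hρ : 0 < ρ)
    (θ : ℝ) : circleMap ω ρ θ ∈ closedBall z r ↔ ρ ≤ exitRadius (z - ω) r θ := by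
  have hc : ‖z - ω‖ ≤ r := by rwa [← dist_eq_norm, dist_comm, ← mem_closedBall]
  have hr : 0 ≤ r := (norm_nonneg _).trans hc
  rw [mem_closedBall, dist_eq_norm, ← sq_le_sq₀ (norm_nonneg _) hr, norm_circleMap_sub_sq,
    exitRadius, ← le_add_sqrt_iff (by nlinarith [norm_nonneg (z - ω)]) hρ.le]
  constructor <;> intro h <;> linarith

lemma exitRadius_nonneg {c : ℂ} {r : ℝ} (hc : ‖c‖ ≤ r) (θ : ℝ) : 0 ≤ exitRadius c r θ := by
  have : |(c * exp (-(θ * I))).re| ≤ √((c * exp (-(θ * I))).re ^ 2 + (r ^ 2 - ‖c‖ ^ 2)) :=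
    Real.abs_le_sqrt (by nlinarith [norm_nonneg c])
  rw [exitRadius]
  linarith [neg_abs_le (c * exp (-(θ * I))).re]

lemma integral_re_mul_exp_neg_three_mul_I (c : ℂ) :
    ∫ θ in -π..π, ((c * exp (-(θ * I))).re : ℂ) * exp (-3 * θ * I) = 0 := by
  have hsplit : ∀ θ : ℝ, ((c * exp (-(θ * I))).re : ℂ) * exp (-3 * θ * I) =
      c / 2 * exp ((-4 : ℤ) * θ * I) + (starRingEnd ℂ) c / 2 * exp ((-2 : ℤ) * θ * I) := by
    intro θ
    have h₄ : exp ((-4 : ℤ) * θ * I) = exp (-(θ * I)) * exp (-3 * θ * I) := by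
      rw [← Complex.exp_add]; push_cast; ring_nf
    have h₂ : exp ((-2 : ℤ) * θ * I) = exp (θ * I) * exp (-3 * θ * I) := by
      rw [← Complex.exp_add]; push_cast; ring_nf
    rw [re_eq_add_conj, map_mul, ← Complex.exp_conj, h₄, h₂]
    simp only [map_neg, map_mul, conj_ofReal, conj_I, mul_neg, neg_neg]
    ring
  simp_rw [hsplit]
  rw [intervalIntegral.integral_add ((by fun_prop : Continuous _).intervalIntegrable _ _)
      ((by fun_prop : Continuous _).intervalIntegrable _ _),
    intervalIntegral.integral_const_mul, intervalIntegral.integral_const_mul,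
    integral_exp_int_mul_mul_I (by norm_num), integral_exp_int_mul_mul_I (by norm_num)]
  simp

lemma integral_exitRadius_smul_exp_neg_three_mul_I (c : ℂ) (r : ℝ) :
    ∫ θ in -π..π, exitRadius c r θ • exp (-3 * θ * I) = 0 := by
  set S : ℝ → ℝ := fun θ => √((c * exp (-(θ * I))).re ^ 2 + (r ^ 2 - ‖c‖ ^ 2))
  have hS : Function.Antiperiodic (fun θ : ℝ => (S θ : ℂ) * exp (-3 * θ * I)) π := by
    intro θ
    simp only [S, exp_neg_mul_I_add_pi, exp_neg_three_mul_I_add_pi, mul_neg, neg_re, neg_sq]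
  have hSint : ∫ θ in -π..π, (S θ : ℂ) * exp (-3 * θ * I) = 0 := by
    simpa [show -π + 2 * π = π by ring] using hS.intervalIntegral_add_two_mul_eq_zero (-π)
  simp_rw [exitRadius, Complex.real_smul, ofReal_add, add_mul]
  rw [intervalIntegral.integral_add ((by fun_prop : Continuous _).intervalIntegrable _ _)
      ((by fun_prop : Continuous _).intervalIntegrable _ _),
    integral_re_mul_exp_neg_three_mul_I, hSint, add_zero]

end Disc

lemma K_neg (z : ℂ) : K (-z) = -K z := by
  simp only [K, map_neg, neg_sq, neg_div]

lemma K_circleMap_zero (ρ θ : ℝ) : K (circleMap 0 ρ θ) = circleMap 0 ρ⁻¹ (-3 * θ) := by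
  rw [K, conj_circleMap_zero, circleMap_zero_pow, circleMap_zero_div]
  congr 1
  · field_simp
  · push_cast; ring

lemma smul_K_sub_circleMap (ω : ℂ) {ρ : ℝ} (hρ : ρ ≠ 0) (θ : ℝ) :
    ρ • K (ω - circleMap ω ρ θ) = -exp (-3 * θ * I) := by
  rw [← neg_sub, circleMap_sub_center, K_neg, smul_neg, K_circleMap_zero, circleMap_zero,
    Complex.real_smul, ← mul_assoc, ← ofReal_mul, mul_inv_cancel₀ hρ, ofReal_one, one_mul]
  push_cast
  rfl

theorem stmt0_general (z : ℂ) (r : ℝ) (ω : ℂ) (hω : ω ∈ closedBall z r) :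
    ∫ ξ in closedBall z r, K (ω - ξ) ∂volume = 0 := by
  have hc : ‖z - ω‖ ≤ r := by rwa [← dist_eq_norm, dist_comm, ← mem_closedBall]
  rw [setIntegral_eq_intervalIntegral_of_radial measurableSet_closedBall isBounded_closedBall
    (exitRadius_nonneg hc) (fun ρ hρ θ => circleMap_mem_closedBall_iff hω hρ θ)
    (h := fun θ => -exp (-3 * θ * I)) (by fun_prop) (fun ρ hρ θ => smul_K_sub_circleMap ω hρ.ne' θ)]
  simp only [smul_neg, intervalIntegral.integral_neg, integral_exitRadius_smul_exp_neg_three_mul_I,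
    neg_zero]

theorem stmt0 (z : ℂ) (r : ℝ) (hr : 0 < r) (ω : ℂ) (hω : ω ∈ closedBall z r) :
    ∫ ξ in closedBall z r, K (ω - ξ) ∂volume = 0 :=
  stmt0_general z r ω hω
end

section
/- For ω in the complex plane with 0 < t < |ω|, the integral of K(ω-ξ) over the circle ∂B(0,t) with respect to arclength measure equals (2π/ω³)(t|ω|² - 2t³), where K(z) = z̄/z². -/
open MeasureTheory Metric Complex Real

/-!
On the circle `|ξ| = t` we have `conj ξ = t² / ξ` and `|dξ| = t dθ = (t / i) dξ / ξ`, so the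
arclength integral of `K(ω - ξ)` is the contour integral of
`(t / i) (conj ω ξ - t²) / (ξ² (ω - ξ)²)`. Since `ω` lies outside the closed disc, Cauchy's formula
for the derivative evaluates it as `2πi f'(0)` with `f ξ = (t / i) (conj ω ξ - t²) / (ω - ξ)²`.
-/

theorem intervalIntegral_comp_circleMap_eq_circleIntegral {E : Type*} [NormedAddCommGroup E]
    [NormedSpace ℂ E] (f : ℂ → E) (c : ℂ) {R : ℝ} (hR : R ≠ 0) :
    ∫ θ in (0:ℝ)..2 * π, f (circleMap c R θ) = ∮ z in C(c, R), (I * (z - c))⁻¹ • f z := by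
  refine intervalIntegral.integral_congr fun θ _ => ?_
  have h : circleMap 0 R θ ≠ 0 := by simpa using hR
  simp only [deriv_circleMap, circleMap_sub_center, smul_smul]
  rw [mul_comm I, mul_inv_cancel₀ (mul_ne_zero h I_ne_zero), one_smul]

theorem conj_eq_sq_div_of_mem_sphere {z : ℂ} {t : ℝ} (hz : z ∈ sphere (0 : ℂ) t) :
    starRingEnd ℂ z = (t : ℂ) ^ 2 / z := by
  obtain rfl | hz0 := eq_or_ne z 0
  · simp
  rw [eq_div_iff hz0, mul_comm, mul_conj', mem_sphere_zero_iff_norm.mp hz]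

theorem K_sub_eq_of_mem_sphere (ω : ℂ) {z : ℂ} {t : ℝ} (hz : z ∈ sphere (0 : ℂ) t) (ht : t ≠ 0) :
    K (ω - z) = (starRingEnd ℂ ω * z - t ^ 2) / z / (ω - z) ^ 2 := by
  have hz0 : z ≠ 0 := ne_of_mem_sphere hz ht
  rw [K, map_sub, conj_eq_sq_div_of_mem_sphere hz]
  field_simp

theorem hasDerivAt_affine_div_sub_sq_at_zero (a b : ℂ) {ω : ℂ} (hω : ω ≠ 0) :
    HasDerivAt (fun z => (a * z + b) / (ω - z) ^ 2) ((a * ω + 2 * b) / ω ^ 3) 0 := by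
  refine ((((hasDerivAt_id' 0).const_mul a).add_const b).fun_div
    (((hasDerivAt_id' 0).const_sub ω).fun_pow 2) (by simpa using pow_ne_zero 2 hω)).congr_deriv ?_
  field_simp
  ring

/-- For `0 < t < |ω|`, the integral of `K(ω - ξ)` over the circle `∂B(0,t)` with respect to
arclength measure equals `(2π/ω³)(t|ω|² - 2t³)`. -/
theorem stmt2 (ω : ℂ) (t : ℝ) (ht : 0 < t) (htω : t < ‖ω‖) :
    ∫ θ in (0:ℝ)..(2 * π), K (ω - t * Complex.exp (θ * Complex.I)) * (t : ℂ)
      = (2 * π / ω ^ 3) * ((t : ℂ) * (‖ω‖ : ℂ) ^ 2 - 2 * (t : ℂ) ^ 3) := by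
  have hω : ω ≠ 0 := norm_pos_iff.mp (ht.trans htω)
  set F : ℂ → ℂ := fun z => t / I * ((starRingEnd ℂ ω * z + -t ^ 2) / (ω - z) ^ 2)
  have hF : DifferentiableOn ℂ F (ball 0 ‖ω‖) := by
    refine DifferentiableOn.const_mul (DifferentiableOn.div (by fun_prop) (by fun_prop)
      fun z hz => pow_ne_zero 2 (sub_ne_zero.mpr ?_)) _
    rintro rfl
    exact (mem_ball_zero_iff.mp hz).false
  have hcircle : ∫ θ in (0:ℝ)..(2 * π), K (ω - t * Complex.exp (θ * Complex.I)) * (t : ℂ)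
      = ∮ z in C(0, t), ((z - 0) ^ 2)⁻¹ • F z := by
    rw [← circleIntegral.integral_congr ht.le fun z hz => ?_,
      ← intervalIntegral_comp_circleMap_eq_circleIntegral (fun z => K (ω - z) * t) 0 ht.ne']
    · simp [circleMap]
    · simp only [smul_eq_mul, K_sub_eq_of_mem_sphere ω hz ht.ne', F]
      ring
  have hcauchy := two_pi_I_inv_smul_circleIntegral_sub_sq_inv_smul_of_differentiable isOpen_ball
    (closedBall_subset_ball htω) hF (mem_ball_self ht)
  rw [hcircle, (inv_smul_eq_iff₀ two_pi_I_ne_zero).mp hcauchy,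
    ((hasDerivAt_affine_div_sub_sq_at_zero _ _ hω).const_mul (t / I : ℂ)).deriv, smul_eq_mul,
    conj_mul']
  field_simp
  ring
end

section
/- For all real t ∈ (0,1), writing II = {ξ ∈ A(0,1) ∩ B(i,1) : arg(ξ) ∈ [0, π/6]}, the integral ∫_{II} Im K(-ξ) dm₂(ξ) is strictly positive, where K(z) = z̄/z². -/
/-!
With `ξ = r e^{iθ}` one has `Im K(-ξ) = sin 3θ / r`, which is nonnegative on the sector
`0 ≤ θ ≤ π/3` and positive where `0 < θ < π/3`. On region II (where `0 ≤ θ ≤ π/6` and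
`r > 1/2`) the integrand is therefore nonnegative and bounded, and it is positive on the disc
of radius `1/100` about `0.72 + 0.38 i`, which lies inside region II.
-/

open MeasureTheory Metric Complex Real

/-- Planar Lebesgue measure normalized so that `m₂(B(0,1)) = 1`. -/
noncomputable def m2 : Measure ℂ := (ENNReal.ofReal π)⁻¹ • volume

/-- The annulus `A(0,1) = B(0,1) \ B(0,1/2)`. -/
def ann01 : Set ℂ := closedBall 0 1 \ closedBall 0 (1 / 2)

lemma norm_K (z : ℂ) : ‖K z‖ = ‖z‖⁻¹ := by
  rw [K, norm_div, norm_pow, norm_conj, sq, div_self_mul_self']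

lemma measurable_K : Measurable K := by
  unfold K; fun_prop

lemma im_K_neg (z : ℂ) : (K (-z)).im = Real.sin (3 * arg z) / ‖z‖ := by
  rcases eq_or_ne z 0 with rfl | hz
  · simp [K]
  have hr : ‖z‖ ≠ 0 := norm_ne_zero_iff.2 hz
  have hK : K (-z) = -(starRingEnd ℂ) (z ^ 3) / ((‖z‖ ^ 4 : ℝ) : ℂ) := by
    have hnorm : ((‖z‖ ^ 4 : ℝ) : ℂ) = z ^ 2 * (starRingEnd ℂ) z ^ 2 := by
      rw [← mul_pow, mul_conj, normSq_eq_norm_sq]; push_cast; ring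
    rw [K, map_neg, neg_sq, eq_div_iff (by exact_mod_cast pow_ne_zero 4 hr), map_pow, hnorm]
    field_simp
  have hpow : z ^ 3 = ((‖z‖ ^ 3 : ℝ) : ℂ) * exp (↑(3 * arg z) * I) := by
    conv_lhs => rw [← norm_mul_exp_arg_mul_I z]
    rw [mul_pow, ← Complex.exp_nat_mul]; push_cast; ring_nf
  rw [hK, neg_div, neg_im, div_ofReal_im, conj_im, hpow, im_ofReal_mul, exp_ofReal_mul_I_im]
  field_simp

lemma im_K_neg_nonneg {z : ℂ} (h0 : 0 ≤ arg z) (h : arg z ≤ π / 3) : 0 ≤ (K (-z)).im := by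
  rw [im_K_neg]
  exact div_nonneg (sin_nonneg_of_nonneg_of_le_pi (by positivity) (by linarith)) (norm_nonneg z)

lemma im_K_neg_pos {z : ℂ} (h0 : 0 < arg z) (h : arg z < π / 3) : 0 < (K (-z)).im := by
  have hz : z ≠ 0 := by rintro rfl; simp at h0
  rw [im_K_neg]
  exact div_pos (sin_pos_of_pos_of_lt_pi (by positivity) (by linarith)) (norm_pos_iff.2 hz)

lemma integrableOn_K_neg_annulus {r : ℝ} (hr : 0 < r) (R : ℝ) :
    IntegrableOn (fun z => K (-z)) (closedBall 0 R \ closedBall 0 r) := by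
  refine Measure.integrableOn_of_bounded (M := r⁻¹)
    (measure_mono Set.sdiff_subset |>.trans_lt measure_closedBall_lt_top).ne
    (measurable_K.comp measurable_neg).aestronglyMeasurable
    (ae_restrict_of_forall_mem (measurableSet_closedBall.diff measurableSet_closedBall) ?_)
  rintro z ⟨-, hz⟩
  rw [mem_closedBall_zero_iff, not_le] at hz
  rw [norm_K, norm_neg]
  exact inv_anti₀ hr hz.le

lemma arg_le_iff_im_div_norm_le_sin {z : ℂ} {α : ℝ} (hre : 0 ≤ z.re)
    (hα : α ∈ Set.Icc (-(π / 2)) (π / 2)) : arg z ≤ α ↔ z.im / ‖z‖ ≤ Real.sin α := by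
  have harg : arg z ∈ Set.Icc (-(π / 2)) (π / 2) := abs_le.1 (abs_arg_le_pi_div_two_iff.2 hre)
  rw [← sin_arg]
  exact (strictMonoOn_sin.le_iff_le harg hα).symm

def regionII : Set ℂ :=
  {ξ : ℂ | ξ ∈ ann01 ∩ closedBall Complex.I 1 ∧ Complex.arg ξ ∈ Set.Icc 0 (π / 6)}

lemma measurableSet_regionII : MeasurableSet regionII :=
  ((measurableSet_closedBall.diff measurableSet_closedBall).inter measurableSet_closedBall).inter
    (measurable_arg measurableSet_Icc)

lemma ball_subset_regionII_arg_pos :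
    ball ⟨18 / 25, 19 / 50⟩ (1 / 100) ⊆ {ξ ∈ regionII | 0 < arg ξ} := by
  intro ξ hξ
  rw [mem_ball, Complex.dist_eq] at hξ
  have hre : |ξ.re - 18 / 25| < 1 / 100 := by simpa using (abs_re_le_norm _).trans_lt hξ
  have him : |ξ.im - 19 / 50| < 1 / 100 := by simpa using (abs_im_le_norm _).trans_lt hξ
  obtain ⟨hre₁, hre₂⟩ := abs_lt.1 hre
  obtain ⟨him₁, him₂⟩ := abs_lt.1 him
  have hnorm : ‖ξ‖ ^ 2 = ξ.re ^ 2 + ξ.im ^ 2 := by rw [Complex.sq_norm, normSq_apply]; ring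
  have hnormI : ‖ξ - I‖ ^ 2 = ξ.re ^ 2 + (ξ.im - 1) ^ 2 := by
    rw [Complex.sq_norm, normSq_apply]; simp only [sub_re, sub_im, I_re, I_im]; ring
  have hlow : 4 / 5 < ‖ξ‖ := by nlinarith [norm_nonneg ξ]
  have hre₀ : 0 ≤ ξ.re := by linarith
  have hπ := pi_pos
  refine ⟨⟨⟨⟨?_, ?_⟩, ?_⟩, ?_, ?_⟩, ?_⟩
  · rw [mem_closedBall_zero_iff]; nlinarith [norm_nonneg ξ]
  · rw [mem_closedBall_zero_iff, not_le]; linarith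
  · rw [mem_closedBall, Complex.dist_eq]; nlinarith [norm_nonneg (ξ - I)]
  · exact arg_nonneg_iff.2 (by linarith)
  · rw [arg_le_iff_im_div_norm_le_sin hre₀ ⟨by linarith, by linarith⟩, sin_pi_div_six,
      div_le_iff₀ (by linarith)]
    linarith
  · rw [← not_le, arg_le_iff_im_div_norm_le_sin hre₀ ⟨by linarith, by linarith⟩, Real.sin_zero,
      not_le]
    exact div_pos (by linarith) (by linarith)

theorem stmt6 : ∀ t : ℝ, t ∈ Set.Ioo (0:ℝ) 1 →
    0 < ∫ ξ in {ξ : ℂ | ξ ∈ ann01 ∩ closedBall Complex.I 1 ∧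
        Complex.arg ξ ∈ Set.Icc 0 (π / 6)}, (K (-ξ)).im ∂m2 := by
  intro _ _
  change 0 < ∫ ξ in regionII, (K (-ξ)).im ∂m2
  have hnonneg : ∀ ξ ∈ regionII, 0 ≤ (K (-ξ)).im := fun ξ ⟨_, h0, h6⟩ =>
    im_K_neg_nonneg h0 (by linarith)
  have hint : IntegrableOn (fun ξ => (K (-ξ)).im) regionII :=
    ((integrableOn_K_neg_annulus (by norm_num) 1).mono_set fun ξ h => h.1.1).im
  have hsupp : ball ⟨18 / 25, 19 / 50⟩ (1 / 100) ⊆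
      Function.support (fun ξ => (K (-ξ)).im) ∩ regionII := fun ξ hξ => by
    obtain ⟨hξII, harg⟩ := ball_subset_regionII_arg_pos hξ
    exact ⟨(im_K_neg_pos harg (by linarith [hξII.2.2, pi_pos])).ne', hξII⟩
  have hpos : 0 < ∫ ξ in regionII, (K (-ξ)).im := by
    rw [setIntegral_pos_iff_support_of_nonneg_ae
      (ae_restrict_of_forall_mem measurableSet_regionII hnonneg) hint]
    exact (measure_ball_pos volume _ (by norm_num)).trans_le (measure_mono hsupp)
  rw [m2, Measure.restrict_smul, integral_smul_measure, smul_eq_mul]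
  exact mul_pos (by simp [ENNReal.toReal_ofReal pi_pos.le, pi_pos]) hpos
end

section
/- Let (r_n) be a decreasing sequence with r₀ = 1, r_{n+1} < r_n/100. Suppose E ⊂ ℂ is a set such that for every n ≥ 1 and every z ∈ ℂ, 𝓗¹(E ∩ B(z, (1/4)√(r_n r_{n-1}))) ≤ 2r_n. If moreover √(r_n/r_{n-1}) → 0 as n → ∞, then 𝓗¹(E ∩ Γ) = 0 for every rectifiable curve Γ. -/
open MeasureTheory Metric Complex Filter

/-!
An `L`-Lipschitz image of `[0, 1]` is covered by about `L / ρ` balls of radius `ρ` centred on it.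
At `ρ = √(r (n+1) r n) / 4` each ball carries `E`-measure at most `2 r (n+1)`, so `E` meets the
curve in measure at most `8 L √(r (n+1) / r n) + 6 r (n+1)`. Both terms tend to `0`: the first by
hypothesis, the second because a ratio `r (n+1) / r n → 0` forces `r n → 0` (ratio test).
-/

theorem LipschitzOnWith.image_Icc_subset_biUnion_closedBall {X : Type*} [PseudoMetricSpace X]
    {L : NNReal} {γ : ℝ → X} (hγ : LipschitzOnWith L γ (Set.Icc 0 1)) {N : ℕ} (hN : 0 < N) :
    γ '' Set.Icc 0 1 ⊆ ⋃ k ∈ Finset.range (N + 1), closedBall (γ (k / N)) (L / N) := by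
  rintro _ ⟨t, ht, rfl⟩
  have hN' : (0 : ℝ) < N := by exact_mod_cast hN
  set k := ⌊t * N⌋₊
  have hkN : k ≤ N := Nat.floor_le_of_le (by nlinarith [ht.2])
  have hk : (k : ℝ) / N ∈ Set.Icc (0 : ℝ) 1 :=
    ⟨by positivity, (div_le_one hN').2 (by exact_mod_cast hkN)⟩
  have hdist : dist t (k / N) ≤ 1 / N := by
    have hlo : (k : ℝ) ≤ t * N := Nat.floor_le (by nlinarith [ht.1])
    have hhi : t * N < k + 1 := Nat.lt_floor_add_one _
    have hsub : t - k / N = (t * N - k) / N := by field_simp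
    rw [Real.dist_eq, hsub, abs_div, abs_of_pos hN', div_le_div_iff_of_pos_right hN', abs_le]
    constructor <;> linarith
  refine Set.mem_biUnion (Finset.mem_coe.2 (Finset.mem_range.2 (Nat.lt_succ_of_le hkN))) ?_
  calc dist (γ t) (γ (k / N)) ≤ L * dist t (k / N) := hγ.dist_le_mul t ht _ hk
    _ ≤ L * (1 / N) := by gcongr
    _ = L / N := mul_one_div _ _

theorem measure_inter_lipschitz_image_Icc_le {X : Type*} [PseudoMetricSpace X]
    [MeasurableSpace X] (μ : Measure X) {E : Set X} {ρ c : ℝ} (hρ : 0 < ρ) (hc : 0 ≤ c)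
    (hE : ∀ z, μ (E ∩ closedBall z ρ) ≤ ENNReal.ofReal c) {L : NNReal} {γ : ℝ → X}
    (hγ : LipschitzOnWith L γ (Set.Icc 0 1)) :
    μ (E ∩ γ '' Set.Icc 0 1) ≤ ENNReal.ofReal ((L / ρ + 3) * c) := by
  set N := ⌈(L : ℝ) / ρ⌉₊ + 1
  have hN : (0 : ℝ) < N := by positivity
  have hLN : (L : ℝ) / N ≤ ρ := by
    rw [div_le_iff₀ hN, ← div_le_iff₀' hρ]
    exact (Nat.le_ceil _).trans (by simp [N])
  have hNle : (N : ℝ) + 1 ≤ L / ρ + 3 := by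
    have := Nat.ceil_lt_add_one (by positivity : 0 ≤ (L : ℝ) / ρ)
    push_cast [N]
    linarith
  have hcover : E ∩ γ '' Set.Icc 0 1 ⊆
      ⋃ k ∈ Finset.range (N + 1), E ∩ closedBall (γ (k / N)) ρ := by
    rw [← Set.inter_iUnion₂]
    refine Set.inter_subset_inter_right E
      ((hγ.image_Icc_subset_biUnion_closedBall (by exact_mod_cast hN)).trans ?_)
    exact Set.iUnion₂_mono fun k _ => closedBall_subset_closedBall hLN
  calc μ (E ∩ γ '' Set.Icc 0 1)
      ≤ ∑ k ∈ Finset.range (N + 1), μ (E ∩ closedBall (γ (k / N)) ρ) :=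
        (measure_mono hcover).trans (measure_biUnion_finset_le _ _)
    _ ≤ ∑ k ∈ Finset.range (N + 1), ENNReal.ofReal c := Finset.sum_le_sum fun k _ => hE _
    _ = ENNReal.ofReal ((N + 1) * c) := by
        rw [Finset.sum_const, Finset.card_range, nsmul_eq_mul, ENNReal.ofReal_mul (by positivity)]
        norm_cast
    _ ≤ ENNReal.ofReal ((L / ρ + 3) * c) := ENNReal.ofReal_le_ofReal (by gcongr)

theorem Real.div_sqrt_mul {a : ℝ} (ha : 0 ≤ a) (b : ℝ) : a / √(a * b) = √(a / b) := by
  rw [Real.sqrt_mul ha, Real.sqrt_div ha, ← div_div, Real.div_sqrt]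

theorem tendsto_zero_of_tendsto_sqrt_ratio {r : ℕ → ℝ} (hpos : ∀ n, 0 < r n)
    (hratio : Tendsto (fun n => √(r (n + 1) / r n)) atTop (nhds 0)) :
    Tendsto r atTop (nhds 0) := by
  have hsq : ∀ n, √(r (n + 1) / r n) ^ 2 = ‖r (n + 1)‖ / ‖r n‖ := fun n => by
    rw [Real.sq_sqrt (div_pos (hpos _) (hpos _)).le, Real.norm_of_nonneg (hpos _).le,
      Real.norm_of_nonneg (hpos _).le]
  have hratio' : Tendsto (fun n => ‖r (n + 1)‖ / ‖r n‖) atTop (nhds 0) := by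
    simpa only [hsq, ne_eq, OfNat.ofNat_ne_zero, not_false_eq_true, zero_pow] using hratio.pow 2
  exact (summable_of_ratio_test_tendsto_lt_one zero_lt_one
    (Eventually.of_forall fun n => (hpos n).ne') hratio').tendsto_atTop_zero

theorem stmt14_general (r : ℕ → ℝ) (hpos : ∀ n, 0 < r n)
    (hratio : Tendsto (fun n => Real.sqrt (r (n + 1) / r n)) atTop (nhds 0))
    (E : Set ℂ)
    (hE : ∀ n : ℕ, 1 ≤ n → ∀ z : ℂ,
      μH[1] (E ∩ closedBall z ((1 / 4) * Real.sqrt (r n * r (n - 1))))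
        ≤ ENNReal.ofReal (2 * r n)) :
    ∀ (L : NNReal) (γ : ℝ → ℂ), LipschitzOnWith L γ (Set.Icc 0 1) →
      μH[1] (E ∩ γ '' Set.Icc 0 1) = 0 := by
  intro L γ hγ
  have hbound : ∀ n : ℕ, μH[1] (E ∩ γ '' Set.Icc 0 1)
      ≤ ENNReal.ofReal (8 * L * √(r (n + 1) / r n) + 6 * r (n + 1)) := fun n => by
    have hρ : 0 < (1 / 4) * √(r (n + 1) * r n) := by
      have := mul_pos (hpos (n + 1)) (hpos n)
      positivity
    have h := measure_inter_lipschitz_image_Icc_le μH[1] hρ (by linarith [hpos (n + 1)])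
      (hE (n + 1) n.succ_pos) hγ
    have hscale : (L / ((1 / 4) * √(r (n + 1) * r n)) + 3) * (2 * r (n + 1))
        = 8 * L * √(r (n + 1) / r n) + 6 * r (n + 1) := by
      rw [← Real.div_sqrt_mul (hpos (n + 1)).le]
      field_simp
      ring
    rwa [hscale] at h
  have hlim : Tendsto (fun n => ENNReal.ofReal (8 * L * √(r (n + 1) / r n) + 6 * r (n + 1)))
      atTop (nhds 0) := by
    have hr := (tendsto_zero_of_tendsto_sqrt_ratio hpos hratio).comp (tendsto_add_atTop_nat 1)
    simpa using ENNReal.tendsto_ofReal ((hratio.const_mul (8 * (L : ℝ))).add (hr.const_mul 6))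
  exact le_zero_iff.1 (ge_of_tendsto' hlim hbound)

theorem stmt14 (r : ℕ → ℝ) (hpos : ∀ n, 0 < r n) (h0 : r 0 = 1)
    (hdec : ∀ n, r (n + 1) < r n / 100)
    (hratio : Tendsto (fun n => Real.sqrt (r (n + 1) / r n)) atTop (nhds 0))
    (E : Set ℂ)
    (hE : ∀ n : ℕ, 1 ≤ n → ∀ z : ℂ,
      μH[1] (E ∩ closedBall z ((1 / 4) * Real.sqrt (r n * r (n - 1))))
        ≤ ENNReal.ofReal (2 * r n)) :
    ∀ (L : NNReal) (γ : ℝ → ℂ), LipschitzOnWith L γ (Set.Icc 0 1) →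
      μH[1] (E ∩ γ '' Set.Icc 0 1) = 0 :=
  stmt14_general r hpos hratio E hE
end
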